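/- arXiv:1102.3776 — 2 statements merged into one kernel-verified Lean document; each statement's English description precedes it below -/
import Mathlib

section
/- For every initial condition (x₀,y₀) ∈ O and every input u ∈ L^∞([0,r];U), the output of system (1.1) satisfies p(t,x₀,y₀;u) = q'(t,x₀,y₀;u) x₀ for all t ≥ 0, where p collects the measurable part of the integrated output and q is the integrated weighted transition matrix. -/
open MeasureTheory Matrix Set intervalIntegral Filter

noncomputable section

/-- `g` is locally Lipschitz on the set `s`. -/
def LocLipOn {α β : Type*} [PseudoMetricSpace α] [PseudoMetricSpace β]
    (s : Set α) (g : α → β) : Prop :=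
  ∀ z ∈ s, ∃ K : NNReal, ∃ t ∈ nhdsWithin z s, LipschitzOnWith K g t

/-- `u ∈ L^∞([0,r]; U)` : measurable, with values in `U` and (essentially) bounded on `[0,r]`. -/
def AdmOn (m : ℕ) (r : ℝ) (U : Set (Fin m → ℝ)) (u : ℝ → (Fin m → ℝ)) : Prop :=
  Measurable u ∧ (∀ t ∈ Icc (0:ℝ) r, u t ∈ U) ∧ ∃ M : ℝ, ∀ t ∈ Icc (0:ℝ) r, ‖u t‖ ≤ M

/-- `u ∈ L^∞_loc(ℝ₊; U)` : measurable, with values in `U` and bounded on compact subintervals of `ℝ₊`. -/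
def AdmLoc (m : ℕ) (U : Set (Fin m → ℝ)) (u : ℝ → (Fin m → ℝ)) : Prop :=
  Measurable u ∧ (∀ t, 0 ≤ t → u t ∈ U) ∧ ∀ T : ℝ, ∃ M : ℝ, ∀ t ∈ Icc (0:ℝ) T, ‖u t‖ ≤ M

/-- `u ∈ L^∞(ℝ₊; U)` : measurable, with values in `U` and bounded on `ℝ₊`. -/
def AdmBdd (m : ℕ) (U : Set (Fin m → ℝ)) (u : ℝ → (Fin m → ℝ)) : Prop :=
  Measurable u ∧ (∀ t, 0 ≤ t → u t ∈ U) ∧ ∃ M : ℝ, ∀ t, 0 ≤ t → ‖u t‖ ≤ M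

/-- locally bounded on `ℝ₊`. -/
def LocBddF {E : Type*} [Norm E] (g : ℝ → E) : Prop :=
  ∀ T : ℝ, ∃ M : ℝ, ∀ t ∈ Icc (0:ℝ) T, ‖g t‖ ≤ M

/-- the sup norm `sup_{t ≥ 0} ‖g(t)‖`. -/
def supNorm {E : Type*} [Norm E] (g : ℝ → E) : ℝ :=
  ⨆ t : (Ici (0:ℝ)), ‖g (t : ℝ)‖

/-- `(x, y)` is a (Carathéodory) solution of system (1.1) on `ℝ₊`, for the input `u` :
`ẋ = A(y,u)x + b(y,u)`, `ẏ = f(y,u) + C'(y)x`, `(x(t), y(t)) ∈ O`. -/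
def IsSystemSol (n k m : ℕ) (O : Set ((Fin n → ℝ) × (Fin k → ℝ)))
    (A : (Fin k → ℝ) → (Fin m → ℝ) → Matrix (Fin n) (Fin n) ℝ)
    (b : (Fin k → ℝ) → (Fin m → ℝ) → (Fin n → ℝ))
    (Cm : (Fin k → ℝ) → Matrix (Fin k) (Fin n) ℝ)
    (f : (Fin k → ℝ) → (Fin m → ℝ) → (Fin k → ℝ))
    (u : ℝ → (Fin m → ℝ)) (x : ℝ → (Fin n → ℝ)) (y : ℝ → (Fin k → ℝ)) : Prop :=
  ContinuousOn x (Ici (0:ℝ)) ∧ ContinuousOn y (Ici (0:ℝ)) ∧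
  (∀ t, 0 ≤ t → (x t, y t) ∈ O) ∧
  (∀ t, 0 ≤ t → x t = x 0 + ∫ s in (0:ℝ)..t, (A (y s) (u s) *ᵥ x s + b (y s) (u s))) ∧
  (∀ t, 0 ≤ t → y t = y 0 + ∫ s in (0:ℝ)..t, (f (y s) (u s) + Cm (y s) *ᵥ x s))

/-- `Φ` is the transition matrix of the linear time-varying system `ż = A(y(t), u(t)) z`,
i.e. `Φ̇ = A(y(t),u(t)) Φ`, `Φ(0) = I` (entrywise Carathéodory form), and `Φ(t)` is invertible. -/
def IsTransition (n k m : ℕ)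
    (A : (Fin k → ℝ) → (Fin m → ℝ) → Matrix (Fin n) (Fin n) ℝ)
    (y : ℝ → (Fin k → ℝ)) (u : ℝ → (Fin m → ℝ))
    (Φ : ℝ → Matrix (Fin n) (Fin n) ℝ) : Prop :=
  Φ 0 = 1 ∧ (∀ i j, Continuous fun t => Φ t i j) ∧ (∀ t : ℝ, IsUnit (Φ t).det) ∧
  ∀ (t : ℝ) (i j : Fin n),
    Φ t i j = (1 : Matrix (Fin n) (Fin n) ℝ) i j + ∫ s in (0:ℝ)..t, (A (y s) (u s) * Φ s) i j

/-- `q(t) = ∫₀ᵗ Φ'(s) C(s) ds ∈ ℝ^{n×k}` where `C(s) = (C'(y(s)))'`. -/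
def qmat (n k : ℕ) (Cm : (Fin k → ℝ) → Matrix (Fin k) (Fin n) ℝ)
    (y : ℝ → (Fin k → ℝ)) (Φ : ℝ → Matrix (Fin n) (Fin n) ℝ) (t : ℝ) :
    Matrix (Fin n) (Fin k) ℝ :=
  Matrix.of fun i j => ∫ s in (0:ℝ)..t, ((Φ s)ᵀ * (Cm (y s))ᵀ) i j

/-- `θ(t) = ∫₀ᵗ Φ(t) Φ⁻¹(τ) b(y(τ), u(τ)) dτ`. -/
def thetaVec (n k m : ℕ)
    (b : (Fin k → ℝ) → (Fin m → ℝ) → (Fin n → ℝ))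
    (y : ℝ → (Fin k → ℝ)) (u : ℝ → (Fin m → ℝ))
    (Φ : ℝ → Matrix (Fin n) (Fin n) ℝ) (t : ℝ) : Fin n → ℝ :=
  Φ t *ᵥ ∫ τ in (0:ℝ)..t, (Φ τ)⁻¹ *ᵥ b (y τ) (u τ)

/-- `p(t) = y(t) − y(0) − ∫₀ᵗ f(y(s),u(s)) ds − ∫₀ᵗ C'(y(s)) θ(s) ds`. -/
def pvec (n k m : ℕ)
    (b : (Fin k → ℝ) → (Fin m → ℝ) → (Fin n → ℝ))
    (Cm : (Fin k → ℝ) → Matrix (Fin k) (Fin n) ℝ)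
    (f : (Fin k → ℝ) → (Fin m → ℝ) → (Fin k → ℝ))
    (y : ℝ → (Fin k → ℝ)) (u : ℝ → (Fin m → ℝ))
    (Φ : ℝ → Matrix (Fin n) (Fin n) ℝ) (t : ℝ) : Fin k → ℝ :=
  y t - y 0 - (∫ s in (0:ℝ)..t, f (y s) (u s))
    - ∫ s in (0:ℝ)..t, Cm (y s) *ᵥ thetaVec n k m b y u Φ s

/-- `Q(r) = ∫₀ʳ q(t) q'(t) dt ∈ ℝ^{n×n}`. -/
def Qmat (n k : ℕ) (r : ℝ) (Cm : (Fin k → ℝ) → Matrix (Fin k) (Fin n) ℝ)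
    (y : ℝ → (Fin k → ℝ)) (Φ : ℝ → Matrix (Fin n) (Fin n) ℝ) :
    Matrix (Fin n) (Fin n) ℝ :=
  Matrix.of fun i j => ∫ t in (0:ℝ)..r, (qmat n k Cm y Φ t * (qmat n k Cm y Φ t)ᵀ) i j

/-- the operator `P(y,u) = Φ(r,y;u) Q⁻¹ ∫₀ʳ q(τ) p(τ) dτ + θ(r)` of (2.16). -/
def Pop (n k m : ℕ) (r : ℝ)
    (b : (Fin k → ℝ) → (Fin m → ℝ) → (Fin n → ℝ))
    (Cm : (Fin k → ℝ) → Matrix (Fin k) (Fin n) ℝ)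
    (f : (Fin k → ℝ) → (Fin m → ℝ) → (Fin k → ℝ))
    (Φop : (ℝ → (Fin k → ℝ)) → (ℝ → (Fin m → ℝ)) → ℝ → Matrix (Fin n) (Fin n) ℝ)
    (y : ℝ → (Fin k → ℝ)) (u : ℝ → (Fin m → ℝ)) : Fin n → ℝ :=
  Φop y u r *ᵥ ((Qmat n k r Cm y (Φop y u))⁻¹ *ᵥ
      ∫ τ in (0:ℝ)..r, qmat n k Cm y (Φop y u) τ *ᵥ pvec n k m b Cm f y u (Φop y u) τ)
    + thetaVec n k m b y u (Φop y u) r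

/-- the input `u` strongly distinguishes the state `(x₀, y₀) ∈ O` in time `r > 0` :
`max_{t ∈ [0,r]} |y(t,x₀,y₀;u) − y(t,ξ,y₀;u)| > 0` for every `ξ ≠ x₀` with `(ξ,y₀) ∈ O`. -/
def StronglyDist (n k m : ℕ) (O : Set ((Fin n → ℝ) × (Fin k → ℝ)))
    (Y : (Fin n → ℝ) → (Fin k → ℝ) → (ℝ → (Fin m → ℝ)) → ℝ → (Fin k → ℝ))
    (r : ℝ) (u : ℝ → (Fin m → ℝ)) (x₀ : Fin n → ℝ) (y₀ : Fin k → ℝ) : Prop :=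
  ∀ ξ : Fin n → ℝ, (ξ, y₀) ∈ O → ξ ≠ x₀ →
    ∃ t ∈ Icc (0:ℝ) r, 0 < ‖Y x₀ y₀ u t - Y ξ y₀ u t‖

/-- hypothesis (H1) : system (1.1) is strongly observable in time `r > 0`. -/
def H1prop (n k m : ℕ) (O : Set ((Fin n → ℝ) × (Fin k → ℝ))) (U : Set (Fin m → ℝ))
    (Y : (Fin n → ℝ) → (Fin k → ℝ) → (ℝ → (Fin m → ℝ)) → ℝ → (Fin k → ℝ))
    (r : ℝ) : Prop :=
  ∀ u, AdmLoc m U u → ∀ x₀ y₀, (x₀, y₀) ∈ O → StronglyDist n k m O Y r u x₀ y₀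

/-- hypothesis (R2) : the operator `P` is completely continuous with respect to `y`. -/
def R2prop (n k m : ℕ) (r : ℝ) (U : Set (Fin m → ℝ))
    (P : (ℝ → (Fin k → ℝ)) → (ℝ → (Fin m → ℝ)) → (Fin n → ℝ)) : Prop :=
  ∀ (S : Set (ℝ → (Fin k → ℝ))) (V : Set (ℝ → (Fin m → ℝ))),
    (∀ g ∈ S, Measurable g) → (∃ M : ℝ, ∀ g ∈ S, ∀ t ∈ Icc (0:ℝ) r, ‖g t‖ ≤ M) →
    (∀ v ∈ V, Measurable v ∧ ∀ t ∈ Icc (0:ℝ) r, v t ∈ U) →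
    (∃ M : ℝ, ∀ v ∈ V, ∀ t ∈ Icc (0:ℝ) r, ‖v t‖ ≤ M) →
    (∃ K : ℝ, ∀ g ∈ S, ∀ v ∈ V, ‖P g v‖ ≤ K) ∧
      ∀ ε > (0:ℝ), ∃ δ > (0:ℝ), ∀ g ∈ S, ∀ g' ∈ S, ∀ v ∈ V,
        (∀ t ∈ Icc (0:ℝ) r, ‖g t - g' t‖ < δ) → ‖P g v - P g' v‖ < ε

/-- `z` is the solution of the hybrid observer (3.1) with sampling period `r`, output signal `yt`,
input `u` and initial condition `z₀` : between the jump times `τ_i = i r` the state flows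
according to `ż = A(yt, u) z + b(yt, u)` and at the jump times
`z(τ_{i+1}) = P(δ_{τ_i} yt, δ_{τ_i} u)`. -/
def IsObs (n k m : ℕ) (r : ℝ)
    (A : (Fin k → ℝ) → (Fin m → ℝ) → Matrix (Fin n) (Fin n) ℝ)
    (b : (Fin k → ℝ) → (Fin m → ℝ) → (Fin n → ℝ))
    (P : (ℝ → (Fin k → ℝ)) → (ℝ → (Fin m → ℝ)) → (Fin n → ℝ))
    (u : ℝ → (Fin m → ℝ)) (yt : ℝ → (Fin k → ℝ))
    (z₀ : Fin n → ℝ) (z : ℝ → (Fin n → ℝ)) : Prop :=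
  z 0 = z₀ ∧
  (∀ i : ℕ, ContinuousOn z (Ico ((i : ℝ) * r) (((i : ℝ) + 1) * r)) ∧
    ∀ t ∈ Ico ((i : ℝ) * r) (((i : ℝ) + 1) * r),
      z t = z ((i : ℝ) * r) +
        ∫ s in ((i : ℝ) * r)..t, (A (yt s) (u s) *ᵥ z s + b (yt s) (u s))) ∧
  ∀ i : ℕ, z (((i : ℝ) + 1) * r) =
    P (fun s => yt ((i : ℝ) * r + s)) (fun s => u ((i : ℝ) * r + s))

/-!
Along the trajectory, `x` solves the linear Carathéodory equation `ẋ = a(s) x + β(s)` with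
`a(s) = A(y(s), u(s))` bounded and `β(s) = b(y(s), u(s))` integrable. The product rule for
absolutely continuous functions shows that `z(s) = Φ(s) (x₀ + ∫₀ˢ Φ⁻¹ β)` solves the same integral
equation, and Gronwall's iteration `‖w(s)‖ ≤ B (M s)ʲ / j!` forces `x = z`, i.e. `x = Φ x₀ + θ`.
Substituting this into `y(t) = y₀ + ∫₀ᵗ (f + C' x)` leaves exactly `∫₀ᵗ C' Φ x₀ = q'(t) x₀`.
-/

open scoped Topology

theorem LocLipOn.continuousOn {α β : Type*} [PseudoMetricSpace α] [PseudoMetricSpace β]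
    {s : Set α} {g : α → β} (h : LocLipOn s g) : ContinuousOn g s := fun z hz => by
  obtain ⟨K, t, ht, hlip⟩ := h z hz
  exact (hlip.continuousOn z (mem_of_mem_nhdsWithin hz ht)).mono_of_mem_nhdsWithin ht

theorem ContinuousOn.comp_aestronglyMeasurable_of_ae_mem {α β E : Type*} [TopologicalSpace α]
    [MeasurableSpace α] [OpensMeasurableSpace α] [MeasurableSpace β] {μ : Measure β}
    [NormedAddCommGroup E] [MeasurableSpace E] [BorelSpace E] [SecondCountableTopology E]
    {G : α → E} {S : Set α} {φ : β → α} (hG : ContinuousOn G S) (hS : MeasurableSet S)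
    (hφ : AEMeasurable φ μ) (hφS : ∀ᵐ x ∂μ, φ x ∈ S) :
    AEStronglyMeasurable (fun x => G (φ x)) μ := by
  classical
  have hpw : Measurable (S.piecewise G 0) :=
    hG.measurable_piecewise continuousOn_const hS
  refine (hpw.comp_aemeasurable hφ).aestronglyMeasurable.congr ?_
  filter_upwards [hφS] with x hx
  simp [hx]

section Trajectory

variable {k m : ℕ} {E : Type*} [NormedAddCommGroup E] {Ω : Set (Fin k → ℝ)}
  {U : Set (Fin m → ℝ)} {G : (Fin k → ℝ) × (Fin m → ℝ) → E} {y : ℝ → Fin k → ℝ}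
  {u : ℝ → Fin m → ℝ} {T M : ℝ}

theorem exists_bound_comp_of_continuousOn (hU : IsClosed U) (hG : ContinuousOn G (Ω ×ˢ U))
    (hy : ContinuousOn y (Icc 0 T)) (hyΩ : MapsTo y (Icc 0 T) Ω) (huU : MapsTo u (Icc 0 T) U)
    (hu : ∀ s ∈ Icc 0 T, ‖u s‖ ≤ M) : ∃ C, ∀ s ∈ Icc 0 T, ‖G (y s, u s)‖ ≤ C := by
  have hK : IsCompact ((y '' Icc 0 T) ×ˢ (U ∩ Metric.closedBall 0 M)) :=
    (isCompact_Icc.image_of_continuousOn hy).prod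
      ((isCompact_closedBall 0 M).inter_left hU)
  obtain ⟨C, hC⟩ := hK.exists_bound_of_continuousOn
    (hG.mono (prod_mono (image_subset_iff.2 hyΩ) inter_subset_left))
  exact ⟨C, fun s hs => hC _ ⟨mem_image_of_mem y hs, huU hs, by simpa using hu s hs⟩⟩

theorem integrableOn_comp_of_continuousOn [MeasurableSpace E] [BorelSpace E]
    [SecondCountableTopology E] (hΩ : MeasurableSet Ω) (hU : IsClosed U)
    (hG : ContinuousOn G (Ω ×ˢ U)) (hy : ContinuousOn y (Icc 0 T)) (hyΩ : MapsTo y (Icc 0 T) Ω)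
    (hum : Measurable u) (huU : MapsTo u (Icc 0 T) U) (hu : ∀ s ∈ Icc 0 T, ‖u s‖ ≤ M) :
    IntegrableOn (fun s => G (y s, u s)) (Icc 0 T) := by
  obtain ⟨C, hC⟩ := exists_bound_comp_of_continuousOn hU hG hy hyΩ huU hu
  refine Integrable.of_bound ?_ C (ae_restrict_of_forall_mem measurableSet_Icc hC)
  exact hG.comp_aestronglyMeasurable_of_ae_mem (hΩ.prod hU.measurableSet)
    ((hy.aemeasurable measurableSet_Icc).prodMk hum.aemeasurable)
    (ae_restrict_of_forall_mem measurableSet_Icc fun s hs => ⟨hyΩ hs, huU hs⟩)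

end Trajectory

theorem ContinuousOn.matrix_mulVec {ι κ : Type*} [Fintype κ] {M : ℝ → Matrix ι κ ℝ}
    {v : ℝ → κ → ℝ} {S : Set ℝ} (hM : ContinuousOn M S) (hv : ContinuousOn v S) :
    ContinuousOn (fun s => M s *ᵥ v s) S :=
  continuousOn_iff_continuous_domRestrict.2 <|
    (continuousOn_iff_continuous_domRestrict.1 hM).matrix_mulVec
      (continuousOn_iff_continuous_domRestrict.1 hv)

section VectorValued

variable {ι κ : Type*} [Fintype ι] [Fintype κ] {a b : ℝ}

theorem intervalIntegrable_pi_iff {f : ℝ → ι → ℝ} :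
    IntervalIntegrable f volume a b ↔ ∀ i, IntervalIntegrable (fun s => f s i) volume a b := by
  simp only [intervalIntegrable_iff, IntegrableOn, integrable_pi_iff]

theorem eval_intervalIntegral {f : ℝ → ι → ℝ} (hf : IntervalIntegrable f volume a b) (i : ι) :
    (∫ s in a..b, f s) i = ∫ s in a..b, f s i := by
  simp only [intervalIntegral_eq_integral_uIoc, Pi.smul_apply, smul_eq_mul]
  rw [eval_integral fun j => (intervalIntegrable_pi_iff.1 hf j).def'.integrable]

theorem IntervalIntegrable.matrix_mulVec_continuousOn {M : ℝ → Matrix ι κ ℝ} {v : ℝ → κ → ℝ}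
    (hM : ∀ i j, IntervalIntegrable (fun s => M s i j) volume a b)
    (hv : ContinuousOn v (uIcc a b)) : IntervalIntegrable (fun s => M s *ᵥ v s) volume a b :=
  intervalIntegrable_pi_iff.2 fun i => by
    simpa only [mulVec, dotProduct, Finset.sum_fn] using
      IntervalIntegrable.sum Finset.univ fun j _ =>
        (hM i j).mul_continuousOn (continuousOn_pi.1 hv j)

theorem IntervalIntegrable.continuousOn_matrix_mulVec {M : ℝ → Matrix ι κ ℝ} {v : ℝ → κ → ℝ}
    (hM : ContinuousOn M (uIcc a b)) (hv : IntervalIntegrable v volume a b) :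
    IntervalIntegrable (fun s => M s *ᵥ v s) volume a b :=
  intervalIntegrable_pi_iff.2 fun i => by
    simpa only [mulVec, dotProduct, Finset.sum_fn] using
      IntervalIntegrable.sum Finset.univ fun j _ =>
        (intervalIntegrable_pi_iff.1 hv j).continuousOn_mul
          (continuousOn_pi.1 (continuousOn_pi.1 hM i) j)

theorem IntervalIntegrable.matrix_mul_continuousOn {ι' : Type*} {M : ℝ → Matrix ι κ ℝ}
    {N : ℝ → Matrix κ ι' ℝ} (hM : ∀ i j, IntervalIntegrable (fun s => M s i j) volume a b)
    (hN : ContinuousOn N (uIcc a b)) (i : ι) (j : ι') :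
    IntervalIntegrable (fun s => (M s * N s) i j) volume a b :=
  intervalIntegrable_pi_iff.1 (IntervalIntegrable.matrix_mulVec_continuousOn hM
    (continuousOn_pi.2 fun l => continuousOn_pi.1 (continuousOn_pi.1 hN l) j)) i

theorem Matrix.of_intervalIntegral_mulVec {M : ℝ → Matrix ι κ ℝ}
    (hM : ∀ i j, IntervalIntegrable (fun s => M s i j) volume a b) (v : κ → ℝ) :
    (Matrix.of fun i j => ∫ s in a..b, M s i j) *ᵥ v = ∫ s in a..b, M s *ᵥ v := by
  have hMv : IntervalIntegrable (fun s => M s *ᵥ v) volume a b :=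
    IntervalIntegrable.matrix_mulVec_continuousOn hM continuousOn_const
  ext i
  simp only [eval_intervalIntegral hMv, mulVec, dotProduct, of_apply,
    ← intervalIntegral.integral_mul_const]
  exact (intervalIntegral.integral_finsetSum fun j _ => (hM i j).mul_const (v j)).symm

theorem Matrix.norm_mulVec_le (M : Matrix ι κ ℝ) (v : κ → ℝ) :
    ‖M *ᵥ v‖ ≤ (∑ i, ∑ j, ‖M i j‖) * ‖v‖ := by
  refine (pi_norm_le_iff_of_nonneg (by positivity)).2 fun i => ?_
  calc ‖(M *ᵥ v) i‖ ≤ ∑ j, ‖M i j‖ * ‖v‖ := by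
        refine (norm_sum_le _ _).trans (Finset.sum_le_sum fun j _ => ?_)
        rw [norm_mul]
        exact mul_le_mul_of_nonneg_left (norm_le_pi_norm v j) (norm_nonneg _)
    _ = (∑ j, ‖M i j‖) * ‖v‖ := (Finset.sum_mul ..).symm
    _ ≤ (∑ i, ∑ j, ‖M i j‖) * ‖v‖ := by
        gcongr
        exact Finset.single_le_sum (f := fun i => ∑ j, ‖M i j‖)
          (fun i _ => by positivity) (Finset.mem_univ i)

end VectorValued

theorem integral_mul_primitive_add_primitive_mul {f g : ℝ → ℝ} {a b : ℝ}
    (hf : IntervalIntegrable f volume a b) (hg : IntervalIntegrable g volume a b) (c d : ℝ) :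
    ∫ s in a..b, (f s * (d + ∫ r in a..s, g r) + (c + ∫ r in a..s, f r) * g s)
      = (c + ∫ s in a..b, f s) * (d + ∫ s in a..b, g s) - c * d := by
  have hF := ((LipschitzWith.const c).lipschitzOnWith (s := uIcc a b))
    |>.absolutelyContinuousOnInterval
    |>.fun_add (hf.absolutelyContinuousOnInterval_intervalIntegral left_mem_uIcc)
  have hG := ((LipschitzWith.const d).lipschitzOnWith (s := uIcc a b))
    |>.absolutelyContinuousOnInterval
    |>.fun_add (hg.absolutelyContinuousOnInterval_intervalIntegral left_mem_uIcc)
  have hFG := hF.integral_deriv_mul_eq_sub hG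
  simp only [integral_same, add_zero] at hFG
  rw [← hFG]
  refine integral_congr_ae ?_
  filter_upwards [hf.ae_hasDerivAt_integral, hg.ae_hasDerivAt_integral] with s hfs hgs hs
  have hs' := uIoc_subset_uIcc hs
  rw [((hfs hs' a left_mem_uIcc).const_add c).deriv, ((hgs hs' a left_mem_uIcc).const_add d).deriv]

theorem integral_mul_pow_div_factorial (B M s : ℝ) (j : ℕ) :
    ∫ r in (0:ℝ)..s, M * (B * (M * r) ^ j / j.factorial)
      = B * (M * s) ^ (j + 1) / (j + 1).factorial := by
  have hrw : (fun r : ℝ => M * (B * (M * r) ^ j / j.factorial))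
      = fun r => (M * B * M ^ j / j.factorial) * r ^ j := by
    ext r; rw [mul_pow]; ring
  rw [hrw, intervalIntegral.integral_const_mul, integral_pow, Nat.factorial_succ]
  push_cast
  field_simp
  ring

section Gronwall

variable {E : Type*} [NormedAddCommGroup E] [NormedSpace ℝ E] {w φ : ℝ → E} {T M : ℝ}

theorem norm_le_pow_div_factorial_of_eq_integral {B : ℝ} (hM : 0 ≤ M)
    (heq : ∀ s ∈ Icc 0 T, w s = ∫ r in (0:ℝ)..s, φ r) (hB : ∀ s ∈ Icc 0 T, ‖w s‖ ≤ B)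
    (hφ : ∀ s ∈ Icc 0 T, ‖φ s‖ ≤ M * ‖w s‖) (j : ℕ) :
    ∀ s ∈ Icc 0 T, ‖w s‖ ≤ B * (M * s) ^ j / j.factorial := by
  induction j with
  | zero => simpa using hB
  | succ j ih =>
    intro s hs
    have hbound : ∀ r ∈ Ioc 0 s, ‖φ r‖ ≤ M * (B * (M * r) ^ j / j.factorial) := fun r hr =>
      have hrT : r ∈ Icc 0 T := ⟨hr.1.le, hr.2.trans hs.2⟩
      (hφ r hrT).trans (mul_le_mul_of_nonneg_left (ih r hrT) hM)
    have hB0 : 0 ≤ B := (norm_nonneg _).trans (hB s hs)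
    calc ‖w s‖ ≤ |∫ r in (0:ℝ)..s, M * (B * (M * r) ^ j / j.factorial)| := by
          rw [heq s hs]
          refine norm_integral_le_abs_of_norm_le ?_
            (Continuous.intervalIntegrable (by fun_prop) _ _)
          rw [uIoc_of_le hs.1]
          exact ae_restrict_of_forall_mem measurableSet_Ioc hbound
      _ = B * (M * s) ^ (j + 1) / (j + 1).factorial := by
          rw [integral_mul_pow_div_factorial, abs_of_nonneg]
          have := mul_nonneg hM hs.1
          positivity

theorem eqOn_zero_of_eq_integral_of_norm_le (hw : ContinuousOn w (Icc 0 T))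
    (heq : ∀ s ∈ Icc 0 T, w s = ∫ r in (0:ℝ)..s, φ r) (hφ : ∀ s ∈ Icc 0 T, ‖φ s‖ ≤ M * ‖w s‖) :
    EqOn w 0 (Icc 0 T) := by
  obtain ⟨B, hB⟩ := isCompact_Icc.exists_bound_of_continuousOn hw
  have hφ' : ∀ s ∈ Icc 0 T, ‖φ s‖ ≤ max M 0 * ‖w s‖ := fun s hs =>
    (hφ s hs).trans (by gcongr; exact le_max_left M 0)
  intro s hs
  have hlim : Tendsto (fun j => B * (max M 0 * s) ^ j / j.factorial) atTop (𝓝 0) := by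
    simpa [mul_div_assoc] using
      (FloorSemiring.tendsto_pow_div_factorial_atTop (max M 0 * s)).const_mul B
  exact norm_le_zero_iff.1 <| ge_of_tendsto hlim <| Eventually.of_forall fun j =>
    norm_le_pow_div_factorial_of_eq_integral (le_max_right M 0) heq hB hφ' j s hs

end Gronwall

section LinearSystem

variable {n : ℕ} {a Φ : ℝ → Matrix (Fin n) (Fin n) ℝ}

theorem transition_mulVec_add_integral {τ : ℝ} {h : ℝ → Fin n → ℝ}
    (hΦ : ∀ s ∈ uIcc 0 τ, ∀ i j,
      Φ s i j = (1 : Matrix (Fin n) (Fin n) ℝ) i j + ∫ r in (0:ℝ)..s, (a r * Φ r) i j)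
    (hΦc : ContinuousOn Φ (uIcc 0 τ))
    (ha : ∀ i j, IntervalIntegrable (fun s => a s i j) volume 0 τ)
    (hh : IntervalIntegrable h volume 0 τ) (v : Fin n → ℝ) :
    Φ τ *ᵥ (v + ∫ s in (0:ℝ)..τ, h s)
      = v + ∫ s in (0:ℝ)..τ, (a s *ᵥ (Φ s *ᵥ (v + ∫ r in (0:ℝ)..s, h r)) + Φ s *ᵥ h s) := by
  set H : ℝ → Fin n → ℝ := fun s => v + ∫ r in (0:ℝ)..s, h r
  have hHc : ContinuousOn H (uIcc 0 τ) :=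
    continuousOn_const.add (continuousOn_primitive_interval' hh left_mem_uIcc)
  have hH : ∀ s ∈ uIcc 0 τ, ∀ j, H s j = v j + ∫ r in (0:ℝ)..s, h r j := fun s hs j => by
    simp only [H, Pi.add_apply, eval_intervalIntegral (hh.mono_set (uIcc_subset_uIcc_left hs))]
  have haΦ := IntervalIntegrable.matrix_mul_continuousOn ha hΦc
  have hint : IntervalIntegrable (fun s => a s *ᵥ (Φ s *ᵥ H s) + Φ s *ᵥ h s) volume 0 τ :=
    (IntervalIntegrable.matrix_mulVec_continuousOn ha (hΦc.matrix_mulVec hHc)).add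
      (IntervalIntegrable.continuousOn_matrix_mulVec hΦc hh)
  have hentry : ∀ i j, Φ τ i j * H τ j = (1 : Matrix (Fin n) (Fin n) ℝ) i j * v j
      + ∫ s in (0:ℝ)..τ, ((a s * Φ s) i j * H s j + Φ s i j * h s j) := fun i j => by
    have hprod := integral_mul_primitive_add_primitive_mul (haΦ i j)
      (intervalIntegrable_pi_iff.1 hh j) ((1 : Matrix (Fin n) (Fin n) ℝ) i j) (v j)
    rw [hΦ τ right_mem_uIcc i j, hH τ right_mem_uIcc j, eq_add_of_sub_eq' hprod.symm]
    congr 1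
    refine integral_congr fun s hs => ?_
    simp only [hH s hs j, hΦ s hs i j]
  ext i
  calc (Φ τ *ᵥ H τ) i = ∑ j, Φ τ i j * H τ j := rfl
    _ = v i + ∫ s in (0:ℝ)..τ, ∑ j, ((a s * Φ s) i j * H s j + Φ s i j * h s j) := by
      rw [Finset.sum_congr rfl fun j _ => hentry i j, Finset.sum_add_distrib,
        intervalIntegral.integral_finsetSum fun j _ =>
          ((haΦ i j).mul_continuousOn (continuousOn_pi.1 hHc j)).add
            ((intervalIntegrable_pi_iff.1 hh j).continuousOn_mul
              (continuousOn_pi.1 (continuousOn_pi.1 hΦc i) j))]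
      simp [one_apply]
    _ = (v + ∫ s in (0:ℝ)..τ, (a s *ᵥ (Φ s *ᵥ H s) + Φ s *ᵥ h s)) i := by
      rw [Pi.add_apply, eval_intervalIntegral hint]
      congr 1
      refine integral_congr fun s _ => ?_
      simp only [mulVec_mulVec, Pi.add_apply, mulVec, dotProduct, Finset.sum_add_distrib]

theorem eqOn_of_eq_integral_mulVec_add {T : ℝ} {β x z : ℝ → Fin n → ℝ} {x₀ : Fin n → ℝ}
    (ha : ∀ i j, IntegrableOn (fun s => a s i j) (Icc 0 T))
    (haC : ∀ i j, ∃ C, ∀ s ∈ Icc 0 T, ‖a s i j‖ ≤ C) (hβ : IntegrableOn β (Icc 0 T))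
    (hxc : ContinuousOn x (Icc 0 T)) (hzc : ContinuousOn z (Icc 0 T))
    (hx : ∀ τ ∈ Icc 0 T, x τ = x₀ + ∫ s in (0:ℝ)..τ, (a s *ᵥ x s + β s))
    (hz : ∀ τ ∈ Icc 0 T, z τ = x₀ + ∫ s in (0:ℝ)..τ, (a s *ᵥ z s + β s)) :
    EqOn x z (Icc 0 T) := by
  choose C hC using haC
  have hint : ∀ τ ∈ Icc 0 T, ∀ v : ℝ → Fin n → ℝ, ContinuousOn v (Icc 0 T) →
      IntervalIntegrable (fun s => a s *ᵥ v s + β s) volume 0 τ := fun τ hτ v hv => by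
    have hsub : uIcc 0 τ ⊆ Icc 0 T := by
      rw [uIcc_of_le hτ.1]; exact Icc_subset_Icc_right hτ.2
    exact (IntervalIntegrable.matrix_mulVec_continuousOn
      (fun i j => ((ha i j).mono_set hsub).intervalIntegrable) (hv.mono hsub)).add
        (hβ.mono_set hsub).intervalIntegrable
  have hw : EqOn (fun s => x s - z s) 0 (Icc 0 T) := by
    refine eqOn_zero_of_eq_integral_of_norm_le (φ := fun s => a s *ᵥ (x s - z s))
      (M := ∑ i, ∑ j, C i j) (hxc.sub hzc) (fun τ hτ => ?_) (fun s hs => ?_)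
    · rw [hx τ hτ, hz τ hτ, add_sub_add_left_eq_sub,
        ← intervalIntegral.integral_sub (hint τ hτ x hxc) (hint τ hτ z hzc)]
      refine integral_congr fun s _ => ?_
      simp only [mulVec_sub, add_sub_add_right_eq_sub]
    · refine (norm_mulVec_le _ _).trans ?_
      gcongr with i _ j _
      exact hC i j s hs
  exact fun τ hτ => sub_eq_zero.1 (hw hτ)

theorem variation_of_constants {T : ℝ} {β x : ℝ → Fin n → ℝ} {x₀ : Fin n → ℝ}
    (hΦ : ∀ s ∈ Icc 0 T, ∀ i j,
      Φ s i j = (1 : Matrix (Fin n) (Fin n) ℝ) i j + ∫ r in (0:ℝ)..s, (a r * Φ r) i j)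
    (hΦc : ContinuousOn Φ (Icc 0 T)) (hΦdet : ∀ s ∈ Icc 0 T, IsUnit (Φ s).det)
    (ha : ∀ i j, IntegrableOn (fun s => a s i j) (Icc 0 T))
    (haC : ∀ i j, ∃ C, ∀ s ∈ Icc 0 T, ‖a s i j‖ ≤ C)
    (hβ : IntegrableOn β (Icc 0 T)) (hxc : ContinuousOn x (Icc 0 T))
    (hx : ∀ τ ∈ Icc 0 T, x τ = x₀ + ∫ s in (0:ℝ)..τ, (a s *ᵥ x s + β s)) :
    ∀ τ ∈ Icc 0 T, x τ = Φ τ *ᵥ x₀ + Φ τ *ᵥ ∫ s in (0:ℝ)..τ, (Φ s)⁻¹ *ᵥ β s := by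
  obtain hT | hT := lt_or_ge T 0
  · exact fun τ hτ => absurd (hτ.1.trans hτ.2) hT.not_ge
  have hsub : ∀ τ ∈ Icc 0 T, uIcc 0 τ ⊆ Icc 0 T := fun τ hτ => by
    rw [uIcc_of_le hτ.1]; exact Icc_subset_Icc_right hτ.2
  have hΦinv : ContinuousOn (fun s => (Φ s)⁻¹) (Icc 0 T) := fun s hs =>
    (continuousAt_matrix_inv _ (NormedRing.inverse_continuousAt (hΦdet s hs).unit))
      |>.comp_continuousWithinAt (hΦc s hs)
  have hh : ∀ τ ∈ Icc 0 T, IntervalIntegrable (fun s => (Φ s)⁻¹ *ᵥ β s) volume 0 τ :=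
    fun τ hτ => IntervalIntegrable.continuousOn_matrix_mulVec (hΦinv.mono (hsub τ hτ))
      (hβ.mono_set (hsub τ hτ)).intervalIntegrable
  set z : ℝ → Fin n → ℝ := fun τ => Φ τ *ᵥ (x₀ + ∫ s in (0:ℝ)..τ, (Φ s)⁻¹ *ᵥ β s)
  have hz : ∀ τ ∈ Icc 0 T, z τ = x₀ + ∫ s in (0:ℝ)..τ, (a s *ᵥ z s + β s) := fun τ hτ => by
    simp only [z]
    rw [transition_mulVec_add_integral (fun s hs => hΦ s (hsub τ hτ hs)) (hΦc.mono (hsub τ hτ))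
      (fun i j => ((ha i j).mono_set (hsub τ hτ)).intervalIntegrable) (hh τ hτ)]
    congr 1
    refine integral_congr fun s hs => ?_
    simp only [mulVec_mulVec, mul_nonsing_inv _ (hΦdet s (hsub τ hτ hs)), one_mulVec]
  have hzc : ContinuousOn z (Icc 0 T) := hΦc.matrix_mulVec <| continuousOn_const.add <|
    (continuousOn_primitive_interval' (hh T ⟨hT, le_rfl⟩) left_mem_uIcc).mono Icc_subset_uIcc
  intro τ hτ
  rw [← mulVec_add]
  exact eqOn_of_eq_integral_mulVec_add ha haC hβ hxc hzc hx hz hτ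

end LinearSystem

theorem pvec_eq_qmat_transpose_mulVec {n k m : ℕ} {b : (Fin k → ℝ) → (Fin m → ℝ) → (Fin n → ℝ)}
    {Cm : (Fin k → ℝ) → Matrix (Fin k) (Fin n) ℝ} {f : (Fin k → ℝ) → (Fin m → ℝ) → (Fin k → ℝ)}
    {y : ℝ → Fin k → ℝ} {u : ℝ → Fin m → ℝ} {Φ : ℝ → Matrix (Fin n) (Fin n) ℝ}
    {x : ℝ → Fin n → ℝ} {x₀ : Fin n → ℝ} {t : ℝ} (ht : 0 ≤ t)
    (hy : y t = y 0 + ∫ s in (0:ℝ)..t, (f (y s) (u s) + Cm (y s) *ᵥ x s))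
    (hx : ∀ s ∈ Icc 0 t, x s = Φ s *ᵥ x₀ + thetaVec n k m b y u Φ s)
    (hf : IntervalIntegrable (fun s => f (y s) (u s)) volume 0 t)
    (hC : ContinuousOn (fun s => Cm (y s)) (Icc 0 t)) (hΦ : ContinuousOn Φ (Icc 0 t))
    (hxc : ContinuousOn x (Icc 0 t)) :
    pvec n k m b Cm f y u Φ t = (qmat n k Cm y Φ t)ᵀ *ᵥ x₀ := by
  rw [← uIcc_of_le ht] at hx hC hΦ hxc
  have hCx : IntervalIntegrable (fun s => Cm (y s) *ᵥ x s) volume 0 t :=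
    (hC.matrix_mulVec hxc).intervalIntegrable
  have hCΦ : IntervalIntegrable (fun s => Cm (y s) *ᵥ (Φ s *ᵥ x₀)) volume 0 t :=
    (hC.matrix_mulVec (hΦ.matrix_mulVec continuousOn_const)).intervalIntegrable
  have hq : (qmat n k Cm y Φ t)ᵀ *ᵥ x₀ = ∫ s in (0:ℝ)..t, Cm (y s) *ᵥ (Φ s *ᵥ x₀) := by
    have hqT : (qmat n k Cm y Φ t)ᵀ = of fun i j => ∫ s in (0:ℝ)..t, (Cm (y s) * Φ s) i j := by
      ext i j
      simp [qmat, ← transpose_mul]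
    rw [hqT, of_intervalIntegral_mulVec (IntervalIntegrable.matrix_mul_continuousOn
      (fun i j => (continuousOn_pi.1 (continuousOn_pi.1 hC i) j).intervalIntegrable) hΦ)]
    simp only [mulVec_mulVec]
  have hθ : ∫ s in (0:ℝ)..t, Cm (y s) *ᵥ thetaVec n k m b y u Φ s
      = ∫ s in (0:ℝ)..t, (Cm (y s) *ᵥ x s - Cm (y s) *ᵥ (Φ s *ᵥ x₀)) := by
    refine integral_congr fun s hs => ?_
    simp only [hx s hs, mulVec_add, add_sub_cancel_left]
  rw [pvec, hy, intervalIntegral.integral_add hf hCx, hθ, intervalIntegral.integral_sub hCx hCΦ, hq]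
  abel

theorem fact_I_output_representation_general
    (n k m : ℕ) (O : Set ((Fin n → ℝ) × (Fin k → ℝ))) (hO : IsOpen O)
    (U : Set (Fin m → ℝ)) (hUcl : IsClosed U)
    (A : (Fin k → ℝ) → (Fin m → ℝ) → Matrix (Fin n) (Fin n) ℝ)
    (b : (Fin k → ℝ) → (Fin m → ℝ) → (Fin n → ℝ))
    (Cm : (Fin k → ℝ) → Matrix (Fin k) (Fin n) ℝ)
    (f : (Fin k → ℝ) → (Fin m → ℝ) → (Fin k → ℝ))
    (hA : ∀ i j, LocLipOn (({y : Fin k → ℝ | ∃ x : Fin n → ℝ, (x, y) ∈ O}) ×ˢ U)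
      (fun p => A p.1 p.2 i j))
    (hb : LocLipOn (({y : Fin k → ℝ | ∃ x : Fin n → ℝ, (x, y) ∈ O}) ×ˢ U)
      (fun p => b p.1 p.2))
    (hCm : ∀ i j, LocLipOn {y : Fin k → ℝ | ∃ x : Fin n → ℝ, (x, y) ∈ O} (fun y => Cm y i j))
    (hf : LocLipOn (({y : Fin k → ℝ | ∃ x : Fin n → ℝ, (x, y) ∈ O}) ×ˢ U)
      (fun p => f p.1 p.2))
    (X : (Fin n → ℝ) → (Fin k → ℝ) → (ℝ → (Fin m → ℝ)) → ℝ → (Fin n → ℝ))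
    (Y : (Fin n → ℝ) → (Fin k → ℝ) → (ℝ → (Fin m → ℝ)) → ℝ → (Fin k → ℝ))
    (hXY : ∀ x₀ y₀, (x₀, y₀) ∈ O → ∀ u, AdmLoc m U u →
      IsSystemSol n k m O A b Cm f u (X x₀ y₀ u) (Y x₀ y₀ u) ∧
        X x₀ y₀ u 0 = x₀ ∧ Y x₀ y₀ u 0 = y₀)
    (x₀ : Fin n → ℝ) (y₀ : Fin k → ℝ) (hxy₀ : (x₀, y₀) ∈ O)
    (u : ℝ → (Fin m → ℝ)) (hu : AdmLoc m U u)
    (Φ : ℝ → Matrix (Fin n) (Fin n) ℝ)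
    (hΦ : IsTransition n k m A (Y x₀ y₀ u) u Φ) :
    ∀ t, 0 ≤ t →
      pvec n k m b Cm f (Y x₀ y₀ u) u Φ t = (qmat n k Cm (Y x₀ y₀ u) Φ t)ᵀ *ᵥ x₀ := by
  intro t ht
  obtain ⟨⟨hxc, hyc, hxyO, hxeq, hyeq⟩, hx0, -⟩ := hXY x₀ y₀ hxy₀ u hu
  obtain ⟨-, hΦc, hΦdet, hΦeq⟩ := hΦ
  obtain ⟨hum, huU, hub⟩ := hu
  obtain ⟨M, hM⟩ := hub t
  set Ω : Set (Fin k → ℝ) := {y | ∃ x : Fin n → ℝ, (x, y) ∈ O}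
  have hΩ : IsOpen Ω := by simpa [image] using isOpenMap_snd O hO
  have hyc' : ContinuousOn (Y x₀ y₀ u) (Icc 0 t) := hyc.mono Icc_subset_Ici_self
  have hyΩ : MapsTo (Y x₀ y₀ u) (Icc 0 t) Ω := fun s hs => ⟨_, hxyO s hs.1⟩
  have huU' : MapsTo u (Icc 0 t) U := fun s hs => huU s hs.1
  have hΦc' : ContinuousOn Φ (Icc 0 t) := (continuous_matrix hΦc).continuousOn
  have hx := variation_of_constants (fun s _ => hΦeq s) hΦc' (fun s _ => hΦdet s)
    (fun i j => integrableOn_comp_of_continuousOn hΩ.measurableSet hUcl (hA i j).continuousOn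
      hyc' hyΩ hum huU' hM)
    (fun i j => exists_bound_comp_of_continuousOn hUcl (hA i j).continuousOn hyc' hyΩ huU' hM)
    (integrableOn_comp_of_continuousOn hΩ.measurableSet hUcl hb.continuousOn hyc' hyΩ hum huU' hM)
    (hxc.mono Icc_subset_Ici_self) (fun τ hτ => by rw [hxeq τ hτ.1, hx0])
  refine pvec_eq_qmat_transpose_mulVec ht (hyeq t ht) hx ?_ ?_ hΦc' (hxc.mono Icc_subset_Ici_self)
  · exact (intervalIntegrable_iff_integrableOn_Icc_of_le ht).2 <|
      integrableOn_comp_of_continuousOn hΩ.measurableSet hUcl hf.continuousOn hyc' hyΩ hum huU' hM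
  · exact continuousOn_pi.2 fun i => continuousOn_pi.2 fun j => (hCm i j).continuousOn.comp hyc' hyΩ

/-- Fact I, equation (2.5): the integrated output satisfies
`p(t,x₀,y₀;u) = q'(t,x₀,y₀;u) x₀` for all `t ≥ 0`. -/
theorem fact_I_output_representation
    (n k m : ℕ) (O : Set ((Fin n → ℝ) × (Fin k → ℝ))) (hO : IsOpen O)
    (U : Set (Fin m → ℝ)) (hUne : U.Nonempty) (hUcl : IsClosed U)
    (A : (Fin k → ℝ) → (Fin m → ℝ) → Matrix (Fin n) (Fin n) ℝ)
    (b : (Fin k → ℝ) → (Fin m → ℝ) → (Fin n → ℝ))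
    (Cm : (Fin k → ℝ) → Matrix (Fin k) (Fin n) ℝ)
    (f : (Fin k → ℝ) → (Fin m → ℝ) → (Fin k → ℝ))
    (hA : ∀ i j, LocLipOn (({y : Fin k → ℝ | ∃ x : Fin n → ℝ, (x, y) ∈ O}) ×ˢ U)
      (fun p => A p.1 p.2 i j))
    (hb : LocLipOn (({y : Fin k → ℝ | ∃ x : Fin n → ℝ, (x, y) ∈ O}) ×ˢ U)
      (fun p => b p.1 p.2))
    (hCm : ∀ i j, LocLipOn {y : Fin k → ℝ | ∃ x : Fin n → ℝ, (x, y) ∈ O} (fun y => Cm y i j))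
    (hf : LocLipOn (({y : Fin k → ℝ | ∃ x : Fin n → ℝ, (x, y) ∈ O}) ×ˢ U)
      (fun p => f p.1 p.2))
    (X : (Fin n → ℝ) → (Fin k → ℝ) → (ℝ → (Fin m → ℝ)) → ℝ → (Fin n → ℝ))
    (Y : (Fin n → ℝ) → (Fin k → ℝ) → (ℝ → (Fin m → ℝ)) → ℝ → (Fin k → ℝ))
    (hXY : ∀ x₀ y₀, (x₀, y₀) ∈ O → ∀ u, AdmLoc m U u →
      IsSystemSol n k m O A b Cm f u (X x₀ y₀ u) (Y x₀ y₀ u) ∧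
        X x₀ y₀ u 0 = x₀ ∧ Y x₀ y₀ u 0 = y₀)
    (hUniq : ∀ x₀ y₀, (x₀, y₀) ∈ O → ∀ u, AdmLoc m U u → ∀ x y,
      IsSystemSol n k m O A b Cm f u x y → x 0 = x₀ → y 0 = y₀ →
        ∀ t, 0 ≤ t → x t = X x₀ y₀ u t ∧ y t = Y x₀ y₀ u t)
    (r : ℝ) (hr : 0 < r)
    (x₀ : Fin n → ℝ) (y₀ : Fin k → ℝ) (hxy₀ : (x₀, y₀) ∈ O)
    (u : ℝ → (Fin m → ℝ)) (hu : AdmLoc m U u) (huU : ∀ t ∈ Icc (0:ℝ) r, u t ∈ U)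
    (Φ : ℝ → Matrix (Fin n) (Fin n) ℝ)
    (hΦ : IsTransition n k m A (Y x₀ y₀ u) u Φ) :
    ∀ t, 0 ≤ t →
      pvec n k m b Cm f (Y x₀ y₀ u) u Φ t = (qmat n k Cm (Y x₀ y₀ u) Φ t)ᵀ *ᵥ x₀ :=
  fact_I_output_representation_general n k m O hO U hUcl A b Cm f hA hb hCm hf X Y hXY x₀ y₀ hxy₀ u
    hu Φ hΦ
end
end

section
/- Consider system (1.1) with O = ℝ^n × ℝ^k and the observer (3.1) driven by ỹ = y + e, with bounded solution (x(t),y(t)) and bounded inputs u, e. Then there exist non-decreasing functions κ : ℝ₊ → ℝ₊ and R : ℝ₊ → ℝ₊ (depending only on the system data) such that the inter-jump error growth estimate |x(t) − z(t)| ≤ [ |x(τ_i) − z(τ_i)| + r‖e‖ R(s) ] exp(rκ(s)) holds for all t ∈ (τ_i, τ_{i+1}), where s := ‖y‖ + ‖e‖ + ‖u‖ + ‖x‖ with ‖y‖ = sup_{t≥0}|y(t)|, ‖x‖ = sup_{t≥0}|x(t)|, ‖u‖ = sup_{t≥0}|u(t)|, ‖e‖ = sup_{t≥0}|e(t)| all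 finite. -/
open MeasureTheory Matrix Set intervalIntegral Filter

noncomputable section

/-! Between two jump times the state `x` and the observer `z` solve the affine equations
`ẋ = A(y,u) x + b(y,u)` and `ż = A(y+e,u) z + b(y+e,u)`. On the compact set of parameters
`(y,u)` and states of size at most `s`, the field `(p, x) ↦ A(p) x + b(p)` is Lipschitz in both
arguments with a constant `L(s)` that can be chosen non-decreasing in `s`. Hence
`‖ẋ - ż‖ ≤ L(s) ‖x - z‖ + L(s) ‖e‖`, and Grönwall's inequality gives the estimate with
`κ = R = L`. -/

open scoped NNReal Topology

theorem LocLipOn.locallyLipschitzOn {α β : Type*} [PseudoMetricSpace α] [PseudoMetricSpace β]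
    {s : Set α} {g : α → β} (h : LocLipOn s g) : LocallyLipschitzOn s g :=
  fun _ hz => h _ hz

theorem gronwallBound_zero_mul_add (K c x : ℝ) :
    c + K * gronwallBound 0 K c x = c * Real.exp (K * x) := by
  by_cases hK : K = 0
  · simp [hK, gronwallBound_K0]
  · rw [gronwallBound_of_K_ne_0 hK]
    field_simp
    ring

theorem le_mul_exp_of_le_add_mul_integral {v : ℝ → ℝ} {a b c K : ℝ}
    (hv : ContinuousOn v (Icc a b)) (hK : 0 ≤ K)
    (h : ∀ t ∈ Icc a b, v t ≤ c + K * ∫ σ in a..t, v σ) :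
    ∀ t ∈ Icc a b, v t ≤ c * Real.exp (K * (t - a)) := by
  have hint : ∀ t ∈ Icc a b, IntervalIntegrable v volume a t := fun t ht =>
    (hv.mono (uIcc_of_le ht.1 ▸ Icc_subset_Icc_right ht.2)).intervalIntegrable
  -- the primitive `W t = ∫ σ in a..t, v σ` satisfies `W a = 0` and `W' = v ≤ c + K W`
  have hW : ∀ t ∈ Icc a b, (∫ σ in a..t, v σ) ≤ gronwallBound 0 K c (t - a) := by
    refine le_gronwallBound_of_liminf_deriv_right_le (f' := v) ?_ (fun x hx r hr => ?_)
      (by simp) fun x hx => by linarith [h x (Ico_subset_Icc_self hx)]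
    · rcases le_or_gt a b with hab | hab
      · exact (intervalIntegral.continuousOn_primitive_interval' (hint b ⟨hab, le_rfl⟩)
          left_mem_uIcc).mono Icc_subset_uIcc
      · simp [Icc_eq_empty_of_lt hab]
    · have hIcc : Icc a b ∈ 𝓝[>] x :=
        mem_of_superset (Ioo_mem_nhdsGT hx.2) (Ioo_subset_Icc_self.trans (Icc_subset_Icc_left hx.1))
      refine HasDerivWithinAt.liminf_right_slope_le ?_ hr
      exact intervalIntegral.integral_hasDerivWithinAt_right (t := Ioi x)
        (hint x (Ico_subset_Icc_self hx))
        ⟨Icc a b, hIcc, hv.aestronglyMeasurable measurableSet_Icc⟩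
        ((hv x (Ico_subset_Icc_self hx)).mono_of_mem_nhdsWithin hIcc)
  intro t ht
  calc v t ≤ c + K * ∫ σ in a..t, v σ := h t ht
    _ ≤ c + K * gronwallBound 0 K c (t - a) := by gcongr; exact hW t ht
    _ = c * Real.exp (K * (t - a)) := gronwallBound_zero_mul_add K c _

theorem norm_sub_le_of_integral_eq {E : Type*} [NormedAddCommGroup E] [NormedSpace ℝ E]
    {x z G H : ℝ → E} {a b K c : ℝ} (hab : a ≤ b) (hK : 0 ≤ K) (hc : 0 ≤ c)
    (hx : ContinuousOn x (Icc a b)) (hz : ContinuousOn z (Icc a b))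
    (hG : IntervalIntegrable G volume a b) (hH : IntervalIntegrable H volume a b)
    (hxG : ∀ t ∈ Icc a b, x t = x a + ∫ σ in a..t, G σ)
    (hzH : ∀ t ∈ Icc a b, z t = z a + ∫ σ in a..t, H σ)
    (hGH : ∀ σ ∈ Icc a b, ‖G σ - H σ‖ ≤ K * ‖x σ - z σ‖ + c) :
    ‖x b - z b‖ ≤ (‖x a - z a‖ + c * (b - a)) * Real.exp (K * (b - a)) := by
  have hv : ContinuousOn (fun t => ‖x t - z t‖) (Icc a b) := (hx.sub hz).norm
  refine le_mul_exp_of_le_add_mul_integral hv hK (fun t ht => ?_) b ⟨hab, le_rfl⟩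
  have hsub : uIcc a t ⊆ Icc a b := uIcc_of_le ht.1 ▸ Icc_subset_Icc_right ht.2
  have hGt := hG.mono_set (uIcc_of_le hab ▸ hsub)
  have hHt := hH.mono_set (uIcc_of_le hab ▸ hsub)
  have hvt : IntervalIntegrable (fun σ => ‖x σ - z σ‖) volume a t :=
    (hv.mono hsub).intervalIntegrable
  calc ‖x t - z t‖ = ‖(x a - z a) + ∫ σ in a..t, (G σ - H σ)‖ := by
        rw [intervalIntegral.integral_sub hGt hHt, hxG t ht, hzH t ht]
        abel_nf
    _ ≤ ‖x a - z a‖ + ∫ σ in a..t, (K * ‖x σ - z σ‖ + c) := by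
        refine (norm_add_le _ _).trans (add_le_add_right ?_ _)
        refine (intervalIntegral.norm_integral_le_integral_norm ht.1).trans ?_
        exact intervalIntegral.integral_mono_on ht.1 (hGt.sub hHt).norm ((hvt.const_mul K).add
          intervalIntegrable_const) fun σ hσ => hGH σ (hsub (uIcc_of_le ht.1 ▸ hσ))
    _ = ‖x a - z a‖ + c * (t - a) + K * ∫ σ in a..t, ‖x σ - z σ‖ := by
        rw [intervalIntegral.integral_add (hvt.const_mul K) intervalIntegrable_const,
          intervalIntegral.integral_const_mul, intervalIntegral.integral_const, smul_eq_mul]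
        ring
    _ ≤ ‖x a - z a‖ + c * (b - a) + K * ∫ σ in a..t, ‖x σ - z σ‖ := by
        gcongr
        exact ht.2

theorem exists_monotone_forall_of_antitone {P : ℝ → ℝ≥0 → Prop} (hP : ∀ s, Monotone (P s))
    (hPs : ∀ L, Antitone (P · L)) (h : ∀ s, ∃ L, P s L) :
    ∃ κ : ℝ → ℝ≥0, Monotone κ ∧ ∀ s, P s (κ s) := by
  choose L hL using fun N : ℕ => h N
  refine ⟨fun s => ∑ j ∈ Finset.range (⌈s⌉₊ + 1), L j, fun s s' hss => ?_, fun s => ?_⟩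
  · exact Finset.sum_le_sum_of_subset (Finset.range_mono (by gcongr))
  · exact hPs _ (Nat.le_ceil s)
      (hP _ (Finset.single_le_sum (fun _ _ => zero_le) (Finset.self_mem_range_succ _)) (hL _))

theorem norm_mulVec_le_of_forall_abs_le {ι ι' : Type*} [Fintype ι] [Fintype ι']
    {M : Matrix ι' ι ℝ} {C : ℝ} (hC : 0 ≤ C) (hM : ∀ i j, |M i j| ≤ C) (w : ι → ℝ) :
    ‖M *ᵥ w‖ ≤ Fintype.card ι * C * ‖w‖ := by
  refine (pi_norm_le_iff_of_nonneg (by positivity)).2 fun i => ?_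
  calc ‖(M *ᵥ w) i‖ = |∑ j, M i j * w j| := rfl
    _ ≤ ∑ j, |M i j| * ‖w‖ := by
        refine (Finset.abs_sum_le_sum_abs _ _).trans (Finset.sum_le_sum fun j _ => ?_)
        rw [abs_mul]
        exact mul_le_mul_of_nonneg_left (norm_le_pi_norm w j) (abs_nonneg _)
    _ ≤ ∑ _j : ι, C * ‖w‖ := by gcongr with j; exact hM i j
    _ = Fintype.card ι * C * ‖w‖ := by simp [mul_assoc]

theorem norm_le_supNorm {E : Type*} [Norm E] {g : ℝ → E} {M : ℝ}
    (hg : ∀ t, 0 ≤ t → ‖g t‖ ≤ M) {t : ℝ} (ht : 0 ≤ t) : ‖g t‖ ≤ supNorm g :=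
  le_ciSup (f := fun t : Ici (0:ℝ) => ‖g t‖) ⟨M, by rintro _ ⟨t, rfl⟩; exact hg t t.2⟩ ⟨t, ht⟩

theorem supNorm_nonneg {E : Type*} [SeminormedAddGroup E] (g : ℝ → E) : 0 ≤ supNorm g :=
  Real.iSup_nonneg fun _ => norm_nonneg _

theorem ContinuousOn.intervalIntegrable_comp_of_isCompact {α E : Type*} [TopologicalSpace α]
    [MeasurableSpace α] [OpensMeasurableSpace α] [NormedAddCommGroup E] [MeasurableSpace E]
    [BorelSpace E] [SecondCountableTopology E] {F : α → E} {S Kc : Set α} (hF : ContinuousOn F S)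
    (hS : MeasurableSet S) (hKc : IsCompact Kc) (hKcS : Kc ⊆ S) {g : ℝ → α} {a b : ℝ}
    (hab : a ≤ b) (hg : AEMeasurable g (volume.restrict (Ioc a b)))
    (hgK : ∀ σ ∈ Ioc a b, g σ ∈ Kc) : IntervalIntegrable (fun σ => F (g σ)) volume a b := by
  classical
  obtain ⟨C, hC⟩ := hKc.exists_bound_of_continuousOn (hF.mono hKcS)
  have hFS : Measurable (S.piecewise F 0) := hF.measurable_piecewise continuousOn_const hS
  rw [intervalIntegrable_iff_integrableOn_Ioc_of_le hab]
  -- `F ∘ g` agrees on `Ioc a b` with the measurable `S.piecewise F 0 ∘ g`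
  refine Integrable.mono' (integrableOn_const (C := C) measure_Ioc_lt_top.ne)
    ((hFS.comp_aemeasurable hg).aestronglyMeasurable.congr ?_) ?_
  all_goals filter_upwards [ae_restrict_mem measurableSet_Ioc] with σ hσ
  · exact piecewise_eq_of_mem _ _ _ (hKcS (hgK σ hσ))
  · exact hC _ (hgK σ hσ)

section AffineField

variable {n k m : ℕ} {U : Set (Fin m → ℝ)}

def boundedParams (U : Set (Fin m → ℝ)) (s : ℝ) : Set ((Fin k → ℝ) × (Fin m → ℝ)) :=
  Metric.closedBall 0 s ×ˢ (U ∩ Metric.closedBall 0 s)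

theorem isCompact_boundedParams (hU : IsClosed U) (s : ℝ) :
    IsCompact (boundedParams (k := k) U s) :=
  (isCompact_closedBall _ _).prod ((isCompact_closedBall _ _).inter_left hU)

theorem boundedParams_subset (s : ℝ) : boundedParams (k := k) U s ⊆ univ ×ˢ U :=
  fun _ hp => ⟨mem_univ _, hp.2.1⟩

theorem boundedParams_mono : Monotone (boundedParams (k := k) U) := fun _ _ hss =>
  prod_mono (Metric.closedBall_subset_closedBall hss)
    (inter_subset_inter_right _ (Metric.closedBall_subset_closedBall hss))

theorem mem_boundedParams_of_norm_add_le {y e : Fin k → ℝ} {u : Fin m → ℝ} {s : ℝ} (hu : u ∈ U)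
    (h : ‖y‖ + ‖e‖ + ‖u‖ ≤ s) : (y, u) ∈ boundedParams U s ∧ (y + e, u) ∈ boundedParams U s := by
  have := norm_add_le y e
  have := norm_nonneg y; have := norm_nonneg e; have := norm_nonneg u
  exact ⟨⟨mem_closedBall_zero_iff.2 (by linarith), hu, mem_closedBall_zero_iff.2 (by linarith)⟩,
    ⟨mem_closedBall_zero_iff.2 (by linarith), hu, mem_closedBall_zero_iff.2 (by linarith)⟩⟩

variable (A : (Fin k → ℝ) → (Fin m → ℝ) → Matrix (Fin n) (Fin n) ℝ)
  (b : (Fin k → ℝ) → (Fin m → ℝ) → (Fin n → ℝ))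

def FieldLipschitzBound (U : Set (Fin m → ℝ)) (s : ℝ) (L : ℝ≥0) : Prop :=
  ∀ p ∈ boundedParams U s, ∀ q ∈ boundedParams U s, ∀ x z : Fin n → ℝ, ‖x‖ ≤ s →
    ‖A p.1 p.2 *ᵥ x + b p.1 p.2 - (A q.1 q.2 *ᵥ z + b q.1 q.2)‖ ≤ L * ‖x - z‖ + L * dist p q

theorem fieldLipschitzBound_mono (s : ℝ) : Monotone (FieldLipschitzBound A b U s) :=
  fun _ _ hL h p hp q hq x z hx => (h p hp q hq x z hx).trans (by gcongr)

theorem fieldLipschitzBound_antitone (L : ℝ≥0) : Antitone (FieldLipschitzBound A b U · L) :=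
  fun _ _ hss h p hp q hq x z hx =>
    h p (boundedParams_mono hss hp) q (boundedParams_mono hss hq) x z (hx.trans hss)

theorem exists_fieldLipschitzBound (hU : IsClosed U)
    (hA : ∀ i j, LocallyLipschitzOn (univ ×ˢ U) fun p : (Fin k → ℝ) × _ => A p.1 p.2 i j)
    (hb : LocallyLipschitzOn (univ ×ˢ U) fun p : (Fin k → ℝ) × _ => b p.1 p.2) (s : ℝ) :
    ∃ L, FieldLipschitzBound A b U s L := by
  set P := boundedParams (k := k) U s
  have hP := isCompact_boundedParams (k := k) hU s
  have hPU := boundedParams_subset (k := k) (U := U) s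
  obtain ⟨C, hC⟩ : ∃ C : ℝ≥0, ∀ p ∈ P, ∀ i j, |A p.1 p.2 i j| ≤ C := by
    choose C hC using fun ij : Fin n × Fin n =>
      hP.exists_bound_of_continuousOn ((hA ij.1 ij.2).continuousOn.mono hPU)
    obtain ⟨C₀, hC₀⟩ := Finite.exists_le fun ij => (C ij).toNNReal
    exact ⟨C₀, fun p hp i j =>
      (hC (i, j) p hp).trans ((Real.le_coe_toNNReal _).trans (NNReal.coe_le_coe.2 (hC₀ _)))⟩
  obtain ⟨LA, hLA⟩ : ∃ LA, ∀ i j, LipschitzOnWith LA (fun p => A p.1 p.2 i j) P := by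
    choose LA hLA using fun ij : Fin n × Fin n =>
      ((hA ij.1 ij.2).mono hPU).exists_lipschitzOnWith_of_compact hP
    obtain ⟨L₀, hL₀⟩ := Finite.exists_le LA
    exact ⟨L₀, fun i j => (hLA (i, j)).weaken (hL₀ _)⟩
  obtain ⟨Lb, hLb⟩ := (hb.mono hPU).exists_lipschitzOnWith_of_compact hP
  refine ⟨n * C + n * LA * s.toNNReal + Lb, fun p hp q hq x z hx => ?_⟩
  have hsplit : A p.1 p.2 *ᵥ x + b p.1 p.2 - (A q.1 q.2 *ᵥ z + b q.1 q.2) =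
      A q.1 q.2 *ᵥ (x - z) + ((A p.1 p.2 - A q.1 q.2) *ᵥ x + (b p.1 p.2 - b q.1 q.2)) := by
    simp only [Matrix.sub_mulVec, Matrix.mulVec_sub]
    abel
  have hq₁ : ‖A q.1 q.2 *ᵥ (x - z)‖ ≤ n * C * ‖x - z‖ := by
    simpa using norm_mulVec_le_of_forall_abs_le C.coe_nonneg (hC q hq) _
  have hpq₁ : ‖(A p.1 p.2 - A q.1 q.2) *ᵥ x‖ ≤ n * (LA * dist p q) * s.toNNReal := by
    refine (norm_mulVec_le_of_forall_abs_le (C := LA * dist p q) (by positivity)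
      (fun i j => ?_) x).trans ?_
    · simpa [Real.dist_eq] using (hLA i j).dist_le_mul p hp q hq
    · simp only [Fintype.card_fin]
      gcongr
      exact hx.trans (Real.le_coe_toNNReal s)
  have hpq₂ : ‖b p.1 p.2 - b q.1 q.2‖ ≤ Lb * dist p q := by
    simpa [dist_eq_norm] using hLb.dist_le_mul p hp q hq
  rw [hsplit]
  refine (norm_add_le_of_le hq₁ (norm_add_le_of_le hpq₁ hpq₂)).trans ?_
  have h₁ : 0 ≤ (n * LA * s.toNNReal + Lb : ℝ) * ‖x - z‖ := by positivity
  have h₂ : 0 ≤ (n * C : ℝ) * dist p q := by positivity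
  push_cast
  linarith

theorem intervalIntegrable_affineField (hU : IsClosed U)
    (hA : ∀ i j, ContinuousOn (fun p : (Fin k → ℝ) × _ => A p.1 p.2 i j) (univ ×ˢ U))
    (hb : ContinuousOn (fun p : (Fin k → ℝ) × _ => b p.1 p.2) (univ ×ˢ U))
    {p : ℝ → (Fin k → ℝ) × (Fin m → ℝ)} {w : ℝ → Fin n → ℝ} {t₀ t₁ s N : ℝ} (ht : t₀ ≤ t₁)
    (hp : AEMeasurable p (volume.restrict (Ioc t₀ t₁)))
    (hw : AEMeasurable w (volume.restrict (Ioc t₀ t₁)))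
    (hpK : ∀ σ ∈ Ioc t₀ t₁, p σ ∈ boundedParams U s) (hwN : ∀ σ ∈ Ioc t₀ t₁, ‖w σ‖ ≤ N) :
    IntervalIntegrable (fun σ => A (p σ).1 (p σ).2 *ᵥ w σ + b (p σ).1 (p σ).2) volume t₀ t₁ := by
  have hAm : ContinuousOn (fun q : ((Fin k → ℝ) × (Fin m → ℝ)) × (Fin n → ℝ) => A q.1.1 q.1.2)
      ((univ ×ˢ U) ×ˢ univ) :=
    continuousOn_pi.2 fun i => continuousOn_pi.2 fun j =>
      (hA i j).comp continuousOn_fst fun _ hq => hq.1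
  refine ((continuous_fst.matrix_mulVec continuous_snd).comp_continuousOn
      (hAm.prodMk continuousOn_snd) |>.add (hb.comp continuousOn_fst fun _ hq => hq.1))
    |>.intervalIntegrable_comp_of_isCompact ((MeasurableSet.univ.prod hU.measurableSet).prod .univ)
    ((isCompact_boundedParams hU s).prod (isCompact_closedBall 0 N))
    (prod_mono (boundedParams_subset s) (subset_univ _)) ht (hp.prodMk hw)
    fun σ hσ => ⟨hpK σ hσ, mem_closedBall_zero_iff.2 (hwN σ hσ)⟩

end AffineField

section Observer
variable {n k m : ℕ} {U : Set (Fin m → ℝ)}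
  {A : (Fin k → ℝ) → (Fin m → ℝ) → Matrix (Fin n) (Fin n) ℝ}
  {b : (Fin k → ℝ) → (Fin m → ℝ) → (Fin n → ℝ)} {O : Set ((Fin n → ℝ) × (Fin k → ℝ))}
  {Cm : (Fin k → ℝ) → Matrix (Fin k) (Fin n) ℝ} {f : (Fin k → ℝ) → (Fin m → ℝ) → (Fin k → ℝ)}
  {u : ℝ → Fin m → ℝ} {x : ℝ → Fin n → ℝ} {y : ℝ → Fin k → ℝ}

theorem IsSystemSol.eq_add_integral (hsol : IsSystemSol n k m O A b Cm f u x y)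
    (hU : IsClosed U)
    (hA : ∀ i j, ContinuousOn (fun p : (Fin k → ℝ) × _ => A p.1 p.2 i j) (univ ×ˢ U))
    (hb : ContinuousOn (fun p : (Fin k → ℝ) × _ => b p.1 p.2) (univ ×ˢ U))
    (hu : Measurable u) {s : ℝ}
    (hbd : ∀ σ, 0 ≤ σ → (y σ, u σ) ∈ boundedParams U s ∧ ‖x σ‖ ≤ s) {τ t : ℝ} (hτ : 0 ≤ τ)
    (hτt : τ ≤ t) :
    IntervalIntegrable (fun ρ => A (y ρ) (u ρ) *ᵥ x ρ + b (y ρ) (u ρ)) volume τ t ∧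
      x t = x τ + ∫ ρ in τ..t, (A (y ρ) (u ρ) *ᵥ x ρ + b (y ρ) (u ρ)) := by
  obtain ⟨hxc, hyc, -, hxG, -⟩ := hsol
  have hint : ∀ t', 0 ≤ t' → IntervalIntegrable
      (fun ρ => A (y ρ) (u ρ) *ᵥ x ρ + b (y ρ) (u ρ)) volume 0 t' := fun t' ht' =>
    have hIoc : Ioc 0 t' ⊆ Ici 0 := fun _ hσ => hσ.1.le
    intervalIntegrable_affineField A b hU hA hb ht' (p := fun σ => (y σ, u σ))
      (((hyc.mono hIoc).aemeasurable measurableSet_Ioc).prodMk hu.aemeasurable)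
      ((hxc.mono hIoc).aemeasurable measurableSet_Ioc)
      (fun σ hσ => (hbd σ hσ.1.le).1) fun σ hσ => (hbd σ hσ.1.le).2
  refine ⟨(hint τ hτ).symm.trans (hint t (hτ.trans hτt)), ?_⟩
  rw [← intervalIntegral.integral_interval_sub_left (hint t (hτ.trans hτt)) (hint τ hτ),
    hxG t (hτ.trans hτt), hxG τ hτ]
  abel

theorem IsSystemSol.norm_sub_le_of_perturbed_flow (hsol : IsSystemSol n k m O A b Cm f u x y)
    (hU : IsClosed U)
    (hA : ∀ i j, ContinuousOn (fun p : (Fin k → ℝ) × _ => A p.1 p.2 i j) (univ ×ˢ U))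
    (hb : ContinuousOn (fun p : (Fin k → ℝ) × _ => b p.1 p.2) (univ ×ˢ U))
    {L : ℝ≥0} {s ε : ℝ} (hL : FieldLipschitzBound A b U s L) {e : ℝ → Fin k → ℝ}
    (hu : Measurable u) (he : Measurable e) (huU : ∀ σ, 0 ≤ σ → u σ ∈ U)
    (hs : ∀ σ, 0 ≤ σ → ‖y σ‖ + ‖e σ‖ + ‖u σ‖ + ‖x σ‖ ≤ s) (heε : ∀ σ, 0 ≤ σ → ‖e σ‖ ≤ ε)
    {z : ℝ → Fin n → ℝ} {τ t : ℝ} (hτ : 0 ≤ τ) (hτt : τ ≤ t) (hz : ContinuousOn z (Icc τ t))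
    (hzH : ∀ σ ∈ Icc τ t,
      z σ = z τ + ∫ ρ in τ..σ, (A (y ρ + e ρ) (u ρ) *ᵥ z ρ + b (y ρ + e ρ) (u ρ))) :
    ‖x t - z t‖ ≤ (‖x τ - z τ‖ + (t - τ) * ε * L) * Real.exp ((t - τ) * L) := by
  have hbd : ∀ σ, 0 ≤ σ → ((y σ, u σ) ∈ boundedParams U s ∧
      (y σ + e σ, u σ) ∈ boundedParams U s) ∧ ‖x σ‖ ≤ s := fun σ hσ =>
    ⟨mem_boundedParams_of_norm_add_le (huU σ hσ)
      ((le_add_of_nonneg_right (norm_nonneg _)).trans (hs σ hσ)),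
      (le_add_of_nonneg_left (by positivity)).trans (hs σ hσ)⟩
  have hG := fun σ (hσ : σ ∈ Icc τ t) => hsol.eq_add_integral hU hA hb hu
    (fun ρ hρ => ⟨(hbd ρ hρ).1.1, (hbd ρ hρ).2⟩) hτ hσ.1
  obtain ⟨N, hN⟩ := isCompact_Icc.exists_bound_of_continuousOn hz
  have hH : IntervalIntegrable
      (fun ρ => A (y ρ + e ρ) (u ρ) *ᵥ z ρ + b (y ρ + e ρ) (u ρ)) volume τ t :=
    intervalIntegrable_affineField A b hU hA hb hτt (p := fun σ => (y σ + e σ, u σ))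
      ((((hsol.2.1.mono fun _ hσ => hτ.trans hσ.1.le).aemeasurable measurableSet_Ioc).add
        he.aemeasurable).prodMk hu.aemeasurable)
      ((hz.mono Ioc_subset_Icc_self).aemeasurable measurableSet_Ioc)
      (fun σ hσ => (hbd σ (hτ.trans hσ.1.le)).1.2) fun σ hσ => hN σ (Ioc_subset_Icc_self hσ)
  have hGH : ∀ σ ∈ Icc τ t, ‖A (y σ) (u σ) *ᵥ x σ + b (y σ) (u σ) -
      (A (y σ + e σ) (u σ) *ᵥ z σ + b (y σ + e σ) (u σ))‖ ≤ L * ‖x σ - z σ‖ + ε * L := by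
    intro σ hσ
    obtain ⟨⟨hp, hq⟩, hx⟩ := hbd σ (hτ.trans hσ.1)
    refine (hL _ hp _ hq _ _ hx).trans ?_
    have hdist : dist (y σ, u σ) (y σ + e σ, u σ) = ‖e σ‖ := by simp [dist_eq_norm]
    rw [hdist, mul_comm ε]
    gcongr
    exact heε σ (hτ.trans hσ.1)
  have hε : 0 ≤ ε := (norm_nonneg _).trans (heε 0 le_rfl)
  refine (norm_sub_le_of_integral_eq hτt L.coe_nonneg (mul_nonneg hε L.coe_nonneg)
    (hsol.1.mono fun σ hσ => hτ.trans hσ.1) hz (hG t ⟨hτt, le_rfl⟩).1 hH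
    (fun σ hσ => (hG σ hσ).2) hzH hGH).trans_eq ?_
  rw [mul_comm (L : ℝ) (t - τ)]
  ring

end Observer

theorem inter_jump_error_growth_estimate_general
    (n k m : ℕ)
    (U : Set (Fin m → ℝ)) (hUcl : IsClosed U)
    (A : (Fin k → ℝ) → (Fin m → ℝ) → Matrix (Fin n) (Fin n) ℝ)
    (b : (Fin k → ℝ) → (Fin m → ℝ) → (Fin n → ℝ))
    (Cm : (Fin k → ℝ) → Matrix (Fin k) (Fin n) ℝ)
    (f : (Fin k → ℝ) → (Fin m → ℝ) → (Fin k → ℝ))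
    (hA : ∀ i j, LocLipOn ((univ : Set (Fin k → ℝ)) ×ˢ U) (fun p => A p.1 p.2 i j))
    (hb : LocLipOn ((univ : Set (Fin k → ℝ)) ×ˢ U) (fun p => b p.1 p.2))
    (X : (Fin n → ℝ) → (Fin k → ℝ) → (ℝ → (Fin m → ℝ)) → ℝ → (Fin n → ℝ))
    (Y : (Fin n → ℝ) → (Fin k → ℝ) → (ℝ → (Fin m → ℝ)) → ℝ → (Fin k → ℝ))
    (hXY : ∀ x₀ y₀ u, AdmLoc m U u →
      IsSystemSol n k m (univ : Set ((Fin n → ℝ) × (Fin k → ℝ))) A b Cm f u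
          (X x₀ y₀ u) (Y x₀ y₀ u) ∧
        X x₀ y₀ u 0 = x₀ ∧ Y x₀ y₀ u 0 = y₀)
    (r : ℝ)
    (Φop : (ℝ → (Fin k → ℝ)) → (ℝ → (Fin m → ℝ)) → ℝ → Matrix (Fin n) (Fin n) ℝ)
    :
    ∃ κ R : ℝ → ℝ,
      MonotoneOn κ (Ici (0:ℝ)) ∧ MonotoneOn R (Ici (0:ℝ)) ∧
      (∀ s, 0 ≤ s → 0 ≤ κ s) ∧ (∀ s, 0 ≤ s → 0 ≤ R s) ∧
      ∀ (x₀ : Fin n → ℝ) (y₀ : Fin k → ℝ) (z₀ : Fin n → ℝ)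
        (u : ℝ → (Fin m → ℝ)) (e : ℝ → (Fin k → ℝ)) (z : ℝ → (Fin n → ℝ)),
        AdmBdd m U u →
        (Measurable e ∧ ∃ M : ℝ, ∀ t, 0 ≤ t → ‖e t‖ ≤ M) →
        (∃ M : ℝ, ∀ t, 0 ≤ t → ‖X x₀ y₀ u t‖ ≤ M) →
        (∃ M : ℝ, ∀ t, 0 ≤ t → ‖Y x₀ y₀ u t‖ ≤ M) →
        IsObs n k m r A b (Pop n k m r b Cm f Φop) u
          (fun t => Y x₀ y₀ u t + e t) z₀ z →
        ∀ i : ℕ, ∀ t ∈ Ioo ((i : ℝ) * r) (((i : ℝ) + 1) * r),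
          ‖X x₀ y₀ u t - z t‖ ≤
            (‖X x₀ y₀ u ((i : ℝ) * r) - z ((i : ℝ) * r)‖ +
                r * supNorm e *
                  R (supNorm (Y x₀ y₀ u) + supNorm e + supNorm u + supNorm (X x₀ y₀ u))) *
              Real.exp (r *
                κ (supNorm (Y x₀ y₀ u) + supNorm e + supNorm u + supNorm (X x₀ y₀ u))) := by
  obtain ⟨L, hLmono, hL⟩ := exists_monotone_forall_of_antitone (fieldLipschitzBound_mono A b)
    (fieldLipschitzBound_antitone A b) (exists_fieldLipschitzBound A b hUcl
      (fun i j => (hA i j).locallyLipschitzOn) hb.locallyLipschitzOn)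
  have hLmono' : Monotone fun s => (L s : ℝ) := NNReal.coe_mono.comp hLmono
  refine ⟨fun s => L s, fun s => L s, hLmono'.monotoneOn _, hLmono'.monotoneOn _,
    fun s _ => (L s).coe_nonneg, fun s _ => (L s).coe_nonneg, ?_⟩
  rintro x₀ y₀ z₀ u e z ⟨hum, huU, Mu, hu⟩ ⟨hem, Me, he⟩ ⟨Mx, hx⟩ ⟨My, hy⟩ hobs i t ht
  have hr : 0 < r := by linarith [ht.1.trans ht.2]
  have hτ : 0 ≤ (i : ℝ) * r := by positivity
  have hlen : t - i * r ≤ r := by linarith [ht.2]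
  obtain ⟨hzc, hzeq⟩ := hobs.2.1 i
  have hIcc : Icc ((i : ℝ) * r) t ⊆ Ico ((i : ℝ) * r) (((i : ℝ) + 1) * r) :=
    Icc_subset_Ico_right ht.2
  have hs : ∀ σ, 0 ≤ σ → ‖Y x₀ y₀ u σ‖ + ‖e σ‖ + ‖u σ‖ + ‖X x₀ y₀ u σ‖ ≤
      supNorm (Y x₀ y₀ u) + supNorm e + supNorm u + supNorm (X x₀ y₀ u) := fun σ hσ =>
    add_le_add (add_le_add (add_le_add (norm_le_supNorm hy hσ) (norm_le_supNorm he hσ))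
      (norm_le_supNorm hu hσ)) (norm_le_supNorm hx hσ)
  have hsol := (hXY x₀ y₀ u ⟨hum, huU, fun _ => ⟨Mu, fun t ht => hu t ht.1⟩⟩).1
  refine (hsol.norm_sub_le_of_perturbed_flow hUcl
    (fun i j => (hA i j).locallyLipschitzOn.continuousOn) hb.locallyLipschitzOn.continuousOn
    (hL _) hum hem huU hs (fun σ => norm_le_supNorm he) hτ ht.1.le (hzc.mono hIcc)
    fun σ hσ => hzeq σ (hIcc hσ)).trans ?_
  have he0 := supNorm_nonneg e
  gcongr

/-- the Fact containing estimate (3.4): there exist non-decreasing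
functions `κ, R : ℝ₊ → ℝ₊`, depending only on the system data, such that between consecutive
jump times the observer error satisfies
`|x(t) − z(t)| ≤ (|x(τ_i) − z(τ_i)| + r ‖e‖ R(s)) exp(r κ(s))` with
`s = ‖y‖ + ‖e‖ + ‖u‖ + ‖x‖` (sup norms over `ℝ₊`). -/
theorem inter_jump_error_growth_estimate
    (n k m : ℕ)
    (U : Set (Fin m → ℝ)) (hUne : U.Nonempty) (hUcl : IsClosed U)
    (A : (Fin k → ℝ) → (Fin m → ℝ) → Matrix (Fin n) (Fin n) ℝ)
    (b : (Fin k → ℝ) → (Fin m → ℝ) → (Fin n → ℝ))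
    (Cm : (Fin k → ℝ) → Matrix (Fin k) (Fin n) ℝ)
    (f : (Fin k → ℝ) → (Fin m → ℝ) → (Fin k → ℝ))
    (hA : ∀ i j, LocLipOn ((univ : Set (Fin k → ℝ)) ×ˢ U) (fun p => A p.1 p.2 i j))
    (hb : LocLipOn ((univ : Set (Fin k → ℝ)) ×ˢ U) (fun p => b p.1 p.2))
    (hCm : ∀ i j, LocLipOn (univ : Set (Fin k → ℝ)) (fun y => Cm y i j))
    (hf : LocLipOn ((univ : Set (Fin k → ℝ)) ×ˢ U) (fun p => f p.1 p.2))
    (X : (Fin n → ℝ) → (Fin k → ℝ) → (ℝ → (Fin m → ℝ)) → ℝ → (Fin n → ℝ))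
    (Y : (Fin n → ℝ) → (Fin k → ℝ) → (ℝ → (Fin m → ℝ)) → ℝ → (Fin k → ℝ))
    (hXY : ∀ x₀ y₀ u, AdmLoc m U u →
      IsSystemSol n k m (univ : Set ((Fin n → ℝ) × (Fin k → ℝ))) A b Cm f u
          (X x₀ y₀ u) (Y x₀ y₀ u) ∧
        X x₀ y₀ u 0 = x₀ ∧ Y x₀ y₀ u 0 = y₀)
    (hUniq : ∀ x₀ y₀ u, AdmLoc m U u → ∀ x y,
      IsSystemSol n k m (univ : Set ((Fin n → ℝ) × (Fin k → ℝ))) A b Cm f u x y →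
        x 0 = x₀ → y 0 = y₀ → ∀ t, 0 ≤ t → x t = X x₀ y₀ u t ∧ y t = Y x₀ y₀ u t)
    (r : ℝ) (hr : 0 < r)
    (Φop : (ℝ → (Fin k → ℝ)) → (ℝ → (Fin m → ℝ)) → ℝ → Matrix (Fin n) (Fin n) ℝ)
    (hΦop : ∀ (y : ℝ → (Fin k → ℝ)) (u : ℝ → (Fin m → ℝ)),
      Measurable y → Measurable u → LocBddF y → LocBddF u →
        IsTransition n k m A y u (Φop y u))
    (hH1 : H1prop n k m (univ : Set ((Fin n → ℝ) × (Fin k → ℝ))) U Y r)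
    (hH2 : ∀ ξ : Fin n → ℝ, ∀ (y : ℝ → (Fin k → ℝ)) (u : ℝ → (Fin m → ℝ)),
      Measurable y → (∃ M : ℝ, ∀ t ∈ Icc (0:ℝ) r, ‖y t‖ ≤ M) → AdmOn m r U u →
      ∃ ζ : ℝ → (Fin n → ℝ), ContinuousOn ζ (Icc (0:ℝ) r) ∧ ζ 0 = ξ ∧
        ∀ t ∈ Icc (0:ℝ) r,
          ζ t = ξ + ∫ s in (0:ℝ)..t, (A (y s) (u s) *ᵥ ζ s + b (y s) (u s)))
    :
    ∃ κ R : ℝ → ℝ,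
      MonotoneOn κ (Ici (0:ℝ)) ∧ MonotoneOn R (Ici (0:ℝ)) ∧
      (∀ s, 0 ≤ s → 0 ≤ κ s) ∧ (∀ s, 0 ≤ s → 0 ≤ R s) ∧
      ∀ (x₀ : Fin n → ℝ) (y₀ : Fin k → ℝ) (z₀ : Fin n → ℝ)
        (u : ℝ → (Fin m → ℝ)) (e : ℝ → (Fin k → ℝ)) (z : ℝ → (Fin n → ℝ)),
        AdmBdd m U u →
        (Measurable e ∧ ∃ M : ℝ, ∀ t, 0 ≤ t → ‖e t‖ ≤ M) →
        (∃ M : ℝ, ∀ t, 0 ≤ t → ‖X x₀ y₀ u t‖ ≤ M) →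
        (∃ M : ℝ, ∀ t, 0 ≤ t → ‖Y x₀ y₀ u t‖ ≤ M) →
        IsObs n k m r A b (Pop n k m r b Cm f Φop) u
          (fun t => Y x₀ y₀ u t + e t) z₀ z →
        ∀ i : ℕ, ∀ t ∈ Ioo ((i : ℝ) * r) (((i : ℝ) + 1) * r),
          ‖X x₀ y₀ u t - z t‖ ≤
            (‖X x₀ y₀ u ((i : ℝ) * r) - z ((i : ℝ) * r)‖ +
                r * supNorm e *
                  R (supNorm (Y x₀ y₀ u) + supNorm e + supNorm u + supNorm (X x₀ y₀ u))) *
              Real.exp (r *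
                κ (supNorm (Y x₀ y₀ u) + supNorm e + supNorm u + supNorm (X x₀ y₀ u))) :=
  inter_jump_error_growth_estimate_general n k m U hUcl A b Cm f hA hb X Y hXY r Φop
end
end
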